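/- The function K(y) = -96 e^{2y}(e^{8y} + 2e^{6y} + 18e^{4y} + 2e^{2y} + 1) / (e^{4y} + 10e^{2y} + 1)^3 is strictly negative for all y > 0, satisfies K(y) ≥ -5/3 for all y > 0, and K(y) → -4/3 as y → 0+ while K(y) → 0 as y → ∞. -/
import Mathlib


open Real Filter

noncomputable def K (y : ℝ) : ℝ :=
  -(96 * Real.exp (2*y) *
      (Real.exp (8*y) + 2 * Real.exp (6*y) + 18 * Real.exp (4*y) +
        2 * Real.exp (2*y) + 1)) /
    (Real.exp (4*y) + 10 * Real.exp (2*y) + 1)^3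

noncomputable def G (x : ℝ) : ℝ :=
  -(96 * (x + 2*x^2 + 18*x^3 + 2*x^4 + x^5)) / (1 + 10*x + x^2)^3

lemma exp_pows (y : ℝ) :
    Real.exp (4*y) = Real.exp (2*y)^2 ∧ Real.exp (6*y) = Real.exp (2*y)^3 ∧
    Real.exp (8*y) = Real.exp (2*y)^4 := by
  refine ⟨?_, ?_, ?_⟩ <;>
  · rw [← Real.exp_nat_mul] <;> norm_num <;> ring_nf

lemma K_eq (y : ℝ) : K y = G (Real.exp (-(2*y))) := by
  obtain ⟨e4, e6, e8⟩ := exp_pows y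
  have hE : Real.exp (2*y) > 0 := Real.exp_pos _
  have hD : (1 + 10 * Real.exp (-(2*y)) + Real.exp (-(2*y))^2)^3 ≠ 0 := by positivity
  have hD2 : (Real.exp (4*y) + 10 * Real.exp (2*y) + 1)^3 ≠ 0 := by positivity
  unfold K G
  rw [Real.exp_neg, e4, e6, e8]
  field_simp

theorem stmt_3 :
    (∀ y : ℝ, 0 < y → K y < 0) ∧
    (∀ y : ℝ, 0 < y → -5/3 ≤ K y) ∧
    Tendsto K (nhdsWithin 0 (Set.Ioi 0)) (nhds (-4/3)) ∧
    Tendsto K atTop (nhds 0) := by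
  have hcont : Continuous K := by
    unfold K
    apply Continuous.div
    · fun_prop
    · fun_prop
    · intro y
      positivity
  refine ⟨?_, ?_, ?_, ?_⟩
  · intro y _
    unfold K
    apply div_neg_of_neg_of_pos
    · have h1 : 0 < 96 * Real.exp (2*y) *
        (Real.exp (8*y) + 2 * Real.exp (6*y) + 18 * Real.exp (4*y) +
          2 * Real.exp (2*y) + 1) := by positivity
      linarith
    · positivity
  · intro y _
    obtain ⟨e4, e6, e8⟩ := exp_pows y
    unfold K
    rw [e4, e6, e8]
    set E := Real.exp (2*y) with hE
    have hEpos : 0 < E := Real.exp_pos _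
    have hD : (0:ℝ) < (E^2 + 10*E + 1)^3 := by positivity
    rw [le_div_iff₀ hD]
    nlinarith [mul_nonneg (sq_nonneg (E^2 - 14*E + 1))
      (by positivity : (0:ℝ) ≤ 5*E^2 + 2*E + 5), sq_nonneg E, hEpos]
  · have hK0 : K 0 = -4/3 := by
      unfold K
      norm_num
    have : Tendsto K (nhdsWithin 0 (Set.Ioi 0)) (nhds (K 0)) :=
      (hcont.tendsto 0).mono_left nhdsWithin_le_nhds
    rwa [hK0] at this
  · have hGC : ContinuousAt G 0 := by
      unfold G
      apply ContinuousAt.div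
      · fun_prop
      · fun_prop
      · norm_num
    have hG0 : G 0 = 0 := by unfold G; norm_num
    have hx : Tendsto (fun y : ℝ => Real.exp (-(2*y))) atTop (nhds 0) := by
      apply Real.tendsto_exp_atBot.comp
      have h2 : Tendsto (fun y : ℝ => 2*y) atTop atTop :=
        tendsto_id.const_mul_atTop two_pos
      exact tendsto_neg_atBot_iff.mpr h2
    have : Tendsto K atTop (nhds (G 0)) := by
      have := hGC.tendsto.comp hx
      have heq : (G ∘ fun y : ℝ => Real.exp (-(2*y))) = K := by
        funext y; simp [Function.comp, K_eq]
      rwa [heq] at this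
    rwa [hG0] at this
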